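/- arXiv:2312.04702 — 3 statements merged into one kernel-verified Lean document; each statement's English description precedes it below -/
import Mathlib

section
/- Let n ≥ 3 and let Σ = {g ∈ SL(n,ℤ) : g(e₁) = ±e₁} and Σ̃ = {g ∈ GL(n,ℤ) : g(e₁) = ±e₁}. Then there exist elements g₁,...,g_r ∈ SL(n,ℤ) \ Σ such that ⋂_{i=1}^r g_i⁻¹ Σ̃ g_i = {±I}, and moreover the g_i can be chosen so that g_i g_j⁻¹ ∉ Σ whenever i ≠ j. -/
/-!
Since `(g A g⁻¹) e₁ = ±e₁` iff `A (g⁻¹ e₁) = ±g⁻¹ e₁`, it suffices to find `gᵢ ∈ SL(n,ℤ)` whose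
vectors `wᵢ = gᵢ⁻¹ e₁` are different from `±e₁`, pairwise different up to sign, and such that only
`±I` maps every `wᵢ` to `±wᵢ`. Products of at most two transvections give `w = e_k` and
`w = e₁ + e_k` for every `k ≠ 1`. A matrix having all of these as eigenvectors is scalar as soon
as `n ≥ 3`: its first column lies in `span(e₁, e_k)` for two different `k`.
-/

open Matrix

theorem smul_eq_or_eq_neg_iff {G V : Type*} [Group G] [AddGroup V] [DistribMulAction G V]
    (g : G) (x y : V) : g • x = y ∨ g • x = -y ↔ x = g⁻¹ • y ∨ x = -(g⁻¹ • y) := by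
  rw [smul_eq_iff_eq_inv_smul, smul_eq_iff_eq_inv_smul, smul_neg]

namespace Matrix

section Frame

variable {ι : Type*} [DecidableEq ι]

variable (R : Type*) [CommRing R] in
def frameVec (i₀ : ι) : {k // k ≠ i₀} ⊕ {k // k ≠ i₀} → ι → R :=
  Sum.elim (fun k => Pi.single k.1 1) (fun k => Pi.single i₀ 1 + Pi.single k.1 1)

variable {R : Type*} [CommRing R] [Nontrivial R]

theorem single_ne_frameVec (i₀ : ι) (s : {k // k ≠ i₀} ⊕ {k // k ≠ i₀}) :
    ¬(Pi.single i₀ 1 = frameVec R i₀ s ∨ Pi.single i₀ 1 = -frameVec R i₀ s) := by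
  obtain ⟨k, hk⟩ : ∃ k : {k // k ≠ i₀}, frameVec R i₀ s k.1 = 1 := by
    rcases s with k | k <;> exact ⟨k, by simp [frameVec, k.2]⟩
  rintro (h | h) <;> simpa [hk, k.2] using congrFun h k.1

theorem frameVec_ne_of_ne (i₀ : ι) {s t : {k // k ≠ i₀} ⊕ {k // k ≠ i₀}} (hst : s ≠ t) :
    ¬(frameVec R i₀ t = frameVec R i₀ s ∨ frameVec R i₀ t = -frameVec R i₀ s) := by
  rcases s with ⟨a, ha⟩ | ⟨a, ha⟩ <;> rcases t with ⟨b, hb⟩ | ⟨b, hb⟩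
  case inl.inl | inr.inr =>
    have hba : b ≠ a := fun h => hst (by subst h; rfl)
    rintro (h | h) <;> simpa [frameVec, hba, hb] using congrFun h b
  all_goals
    rintro (h | h) <;> simpa [frameVec, Pi.single_apply, ha.symm, hb.symm] using congrFun h i₀

end Frame

section Rigidity

variable {ι R : Type*} [Fintype ι] [DecidableEq ι] [CommRing R]

theorem eq_smul_one_of_single_eigenvectors (h3 : 3 ≤ Fintype.card ι) (i₀ : ι)
    {A : Matrix ι ι R}
    (hs : ∀ k ≠ i₀, ∃ s : R, A *ᵥ Pi.single k 1 = s • Pi.single k 1)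
    (ht : ∀ k ≠ i₀, ∃ t : R,
      A *ᵥ (Pi.single i₀ 1 + Pi.single k 1) = t • (Pi.single i₀ 1 + Pi.single k 1)) :
    A = A i₀ i₀ • 1 := by
  have hcol₀ : ∀ k ≠ i₀, ∃ s t : R, A *ᵥ Pi.single k 1 = s • Pi.single k 1 ∧
      A *ᵥ Pi.single i₀ 1 = t • Pi.single i₀ 1 + (t - s) • Pi.single k 1 := by
    intro k hk
    obtain ⟨s, hs⟩ := hs k hk
    obtain ⟨t, ht⟩ := ht k hk
    refine ⟨s, t, hs, ?_⟩
    rw [mulVec_add, hs] at ht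
    rw [sub_smul, ← add_sub_assoc, ← smul_add, ← ht, add_sub_cancel_right]
  have hcol₀_off : ∀ j ≠ i₀, A j i₀ = 0 := by
    intro j hj
    obtain ⟨k, hki₀, hkj⟩ := ENat.exists_ne_ne_of_three_le (by simpa using h3) i₀ j
    obtain ⟨s, t, -, hcol₀⟩ := hcol₀ k hki₀
    simpa [hj, hkj.symm] using congrFun hcol₀ j
  apply ext_of_mulVec_single
  intro k
  rw [smul_mulVec, one_mulVec]
  by_cases hk : k = i₀
  · rw [hk]
    funext j
    by_cases hj : j = i₀
    · simp [hj]
    · simp [hcol₀_off j hj, hj]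
  · obtain ⟨s, t, hs, hcol₀⟩ := hcol₀ k hk
    have hts : t - s = 0 := by simpa [hk, hcol₀_off k hk] using (congrFun hcol₀ k).symm
    have ht : A i₀ i₀ = t := by simpa [hk] using congrFun hcol₀ i₀
    rw [hs, ht, ← sub_eq_zero.mp hts]

theorem eq_one_or_eq_neg_one_of_frameVec (h3 : 3 ≤ Fintype.card ι) (i₀ : ι) {A : Matrix ι ι R}
    (hA : ∀ s, A *ᵥ frameVec R i₀ s = frameVec R i₀ s ∨ A *ᵥ frameVec R i₀ s = -frameVec R i₀ s) :
    A = 1 ∨ A = -1 := by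
  have eigen : ∀ s, ∃ c : R, A *ᵥ frameVec R i₀ s = c • frameVec R i₀ s := fun s =>
    (hA s).elim (fun h => ⟨1, by rw [h, one_smul]⟩) (fun h => ⟨-1, by rw [h, neg_one_smul]⟩)
  have hA_scalar := eq_smul_one_of_single_eigenvectors h3 i₀
    (fun k hk => eigen (.inl ⟨k, hk⟩)) (fun k hk => eigen (.inr ⟨k, hk⟩))
  obtain ⟨k, hk⟩ := Fintype.exists_ne_of_one_lt_card (by omega) i₀
  have hc : A i₀ i₀ = 1 ∨ A i₀ i₀ = -1 := by
    have := hA (.inl ⟨k, hk⟩)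
    rw [hA_scalar, smul_mulVec, one_mulVec] at this
    simpa [frameVec] using this.imp (congrFun · k) (congrFun · k)
  rw [hA_scalar]
  rcases hc with hc | hc <;> simp [hc]

end Rigidity

namespace SpecialLinearGroup

variable {ι R : Type*} [Fintype ι] [DecidableEq ι] [CommRing R]

variable (R) in
def frameLift (i₀ : ι) : {k // k ≠ i₀} ⊕ {k // k ≠ i₀} → SpecialLinearGroup ι R :=
  Sum.elim (fun k => transvection k.2.symm (-1) * transvection k.2 1) (fun k => transvection k.2 1)

theorem frameLift_smul_single (i₀ : ι) (s : {k // k ≠ i₀} ⊕ {k // k ≠ i₀}) :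
    frameLift R i₀ s • Pi.single i₀ 1 = frameVec R i₀ s := by
  rcases s with ⟨k, hk⟩ | ⟨k, hk⟩
  · simp [frameLift, frameVec, mul_smul, transvection_smul_single_snd, smul_add,
      transvection_smul_single_fst]
  · simp [frameLift, frameVec, transvection_smul_single_snd]

theorem toGL_smul (g : SpecialLinearGroup ι R) (v : ι → R) : toGL g • v = g • v := rfl

theorem toGL_inv_conj_smul_iff (g : SpecialLinearGroup ι R) (A : GL ι R) (x : ι → R) :
    (toGL g⁻¹ * A * (toGL g⁻¹)⁻¹) • x = x ∨ (toGL g⁻¹ * A * (toGL g⁻¹)⁻¹) • x = -x ↔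
      A • g • x = g • x ∨ A • g • x = -(g • x) := by
  rw [mul_smul, mul_smul, smul_eq_or_eq_neg_iff, ← map_inv, inv_inv, toGL_smul]

theorem forall_conj_frameLift_inv_smul_single_iff (h3 : 3 ≤ Fintype.card ι) (i₀ : ι)
    (A : GL ι R) :
    (∀ s, (toGL (frameLift R i₀ s)⁻¹ * A * (toGL (frameLift R i₀ s)⁻¹)⁻¹) •
          (Pi.single i₀ 1 : ι → R) = Pi.single i₀ 1 ∨
        (toGL (frameLift R i₀ s)⁻¹ * A * (toGL (frameLift R i₀ s)⁻¹)⁻¹) •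
          (Pi.single i₀ 1 : ι → R) = -Pi.single i₀ 1) ↔ A = 1 ∨ A = -1 := by
  simp only [toGL_inv_conj_smul_iff, frameLift_smul_single]
  simp only [Units.smul_def, smul_eq_mulVec]
  constructor
  · intro hA
    rcases eq_one_or_eq_neg_one_of_frameVec h3 i₀ hA with h | h
    · exact Or.inl (Units.ext h)
    · exact Or.inr (Units.ext h)
  · rintro (rfl | rfl) s <;> simp [neg_mulVec]

variable [Nontrivial R]

theorem frameLift_inv_smul_single_ne (i₀ : ι) (s : {k // k ≠ i₀} ⊕ {k // k ≠ i₀}) :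
    ¬((frameLift R i₀ s)⁻¹ • (Pi.single i₀ 1 : ι → R) = Pi.single i₀ 1 ∨
      (frameLift R i₀ s)⁻¹ • (Pi.single i₀ 1 : ι → R) = -Pi.single i₀ 1) := by
  rw [smul_eq_or_eq_neg_iff, inv_inv, frameLift_smul_single]
  exact single_ne_frameVec i₀ s

theorem frameLift_inv_mul_frameLift_smul_single_ne (i₀ : ι)
    {s t : {k // k ≠ i₀} ⊕ {k // k ≠ i₀}} (hst : s ≠ t) :
    ¬(((frameLift R i₀ s)⁻¹ * frameLift R i₀ t) • (Pi.single i₀ 1 : ι → R) = Pi.single i₀ 1 ∨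
      ((frameLift R i₀ s)⁻¹ * frameLift R i₀ t) • (Pi.single i₀ 1 : ι → R) =
        -Pi.single i₀ 1) := by
  rw [mul_smul, smul_eq_or_eq_neg_iff, inv_inv, frameLift_smul_single, frameLift_smul_single]
  exact frameVec_ne_of_ne i₀ hst

end SpecialLinearGroup

end Matrix

/-- For `n ≥ 3`, with `Σ = {g ∈ SL(n,ℤ) : g e₁ = ±e₁}` and
`Σ̃ = {g ∈ GL(n,ℤ) : g e₁ = ±e₁}`, there exist `g₁,…,g_r ∈ SL(n,ℤ) \ Σ` with
`⋂ᵢ gᵢ⁻¹ Σ̃ gᵢ = {±I}` and `gᵢ gⱼ⁻¹ ∉ Σ` for `i ≠ j`. -/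
theorem stmt_0 (n : ℕ) (hn : 3 ≤ n) :
    ∀ (e : Fin n → ℤ), e = (fun j => if j = (⟨0, by omega⟩ : Fin n) then 1 else 0) →
    ∀ (Sig : Set (Matrix.SpecialLinearGroup (Fin n) ℤ)),
      Sig = {g | g.1.mulVec e = e ∨
                 g.1.mulVec e = -e} →
    ∀ (SigT : Set (Matrix.GeneralLinearGroup (Fin n) ℤ)),
      SigT = {g | g.1.mulVec e = e ∨
                 g.1.mulVec e = -e} →
    ∃ (r : ℕ) (gs : Fin r → Matrix.SpecialLinearGroup (Fin n) ℤ),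
      (∀ i, gs i ∉ Sig) ∧
      ({A : Matrix.GeneralLinearGroup (Fin n) ℤ |
          ∀ i, Matrix.SpecialLinearGroup.toGL (gs i) * A *
            (Matrix.SpecialLinearGroup.toGL (gs i))⁻¹ ∈ SigT} = {1, -1}) ∧
      (∀ i j, i ≠ j → gs i * (gs j)⁻¹ ∉ Sig) := by
  rintro e rfl Sig rfl SigT rfl
  set i₀ : Fin n := ⟨0, by omega⟩
  have he : (fun j => if j = i₀ then 1 else 0 : Fin n → ℤ) = Pi.single i₀ 1 := by
    funext j; simp [Pi.single_apply]
  have h3 : 3 ≤ Fintype.card (Fin n) := by simpa using hn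
  rw [he]
  let σ := (Fintype.equivFin ({k // k ≠ i₀} ⊕ {k // k ≠ i₀})).symm
  refine ⟨_, fun i => (SpecialLinearGroup.frameLift ℤ i₀ (σ i))⁻¹, fun i => ?_, ?_,
    fun i j hij => ?_⟩
  · exact SpecialLinearGroup.frameLift_inv_smul_single_ne i₀ (σ i)
  · ext A
    simp only [Set.mem_ofPred_eq, Set.mem_insert_iff, Set.mem_singleton_iff, ← smul_eq_mulVec,
      ← Units.smul_def, ← SpecialLinearGroup.forall_conj_frameLift_inv_smul_single_iff h3 i₀]
    rw [σ.surjective.forall]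
  · rw [inv_inv]
    exact SpecialLinearGroup.frameLift_inv_mul_frameLift_smul_single_ne i₀ (σ.injective.ne hij)
end

section
/- Let Σ = {g ∈ SL(6,ℤ) : g(e₁) = ±e₁} ⊂ SL(6,ℤ). The subgroup Σᵀ = {gᵀ : g ∈ Σ} is not conjugate to Σ inside GL(6,ℤ). -/
open Matrix

def e1 : Fin 6 → ℤ := fun j => if j = 0 then 1 else 0

/-- `Σ = {g ∈ SL(6,ℤ) : g e₁ = ±e₁}`, as a set of matrices. -/
def SigMatSet : Set (Matrix (Fin 6) (Fin 6) ℤ) :=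
  {g | g.det = 1 ∧ (g.mulVec e1 = e1 ∨ g.mulVec e1 = -e1)}

/-! If `B Σᵀ B⁻¹ = Σ`, every element of `Σᵀ` maps `w = B⁻¹ e₁` to `±w`. For `i ≠ 0` the
transvection `1 + E_ji` fixes `e₁`, so it lies in `Σ` and its transpose `1 + E_ij` lies in `Σᵀ`;
from `(1 + E_ij) w = w + w_j e_i = ±w` we get `w_j = 0`. In dimension `6 ≥ 3` every index `j`
admits such an `i ≠ j`, so `w = 0`, contradicting `B w = e₁`. -/

namespace Matrix

variable {n R : Type*} [DecidableEq n] [CommRing R]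

lemma transpose_transvection (i j : n) (c : R) :
    (transvection i j c)ᵀ = transvection j i c := by
  simp [transvection, transpose_single]

lemma transvection_mulVec [Fintype n] (i j : n) (c : R) (v : n → R) :
    transvection i j c *ᵥ v = v + Pi.single i (c * v j) := by
  ext k
  simp [transvection, add_mulVec, single_mulVec, Function.update_apply, Pi.single_apply]

lemma conj_mulVec_eq_iff [Fintype n] (B : GL n R) (g : Matrix n n R) (v u : n → R) :
    (B.1 * g * (B⁻¹).1) *ᵥ v = u ↔ g *ᵥ ((B⁻¹).1 *ᵥ v) = (B⁻¹).1 *ᵥ u := by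
  constructor
  · rintro rfl
    simp [mulVec_mulVec, ← Matrix.mul_assoc]
  · intro h
    rw [← Matrix.mulVec_mulVec, ← Matrix.mulVec_mulVec, h, mulVec_mulVec]
    simp

lemma apply_eq_zero_of_transvection_mulVec_eq_or_neg [Fintype n] [IsAddTorsionFree R]
    {i j : n} (hij : i ≠ j) (w : n → R)
    (h : transvection i j 1 *ᵥ w = w ∨ transvection i j 1 *ᵥ w = -w) : w j = 0 := by
  rw [transvection_mulVec, one_mul] at h
  rcases h with h | h
  · simpa using congrFun h i
  · have hj := congrFun h j
    rw [Pi.add_apply, Pi.single_eq_of_ne hij.symm, add_zero] at hj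
    exact self_eq_neg.mp hj

end Matrix

lemma transvection_mem_SigMatSet {i j : Fin 6} (hi : i ≠ 0) (hij : i ≠ j) :
    transvection j i 1 ∈ SigMatSet := by
  refine ⟨det_transvection_of_ne j i hij.symm 1, Or.inl ?_⟩
  simp [transvection_mulVec, e1, hi]

lemma eq_zero_of_forall_transpose_mulVec_eq_or_neg (w : Fin 6 → ℤ)
    (h : ∀ g ∈ SigMatSet, gᵀ *ᵥ w = w ∨ gᵀ *ᵥ w = -w) : w = 0 := by
  ext j
  obtain ⟨i, hi, hij⟩ : ∃ i : Fin 6, i ≠ 0 ∧ i ≠ j := by revert j; decide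
  have := h _ (transvection_mem_SigMatSet hi hij)
  rw [transpose_transvection] at this
  exact apply_eq_zero_of_transvection_mulVec_eq_or_neg hij w this

/-- `Σᵀ = {gᵀ : g ∈ Σ}` is not conjugate to `Σ` inside `GL(6,ℤ)`. -/
theorem stmt_6 :
    ¬ ∃ B : Matrix.GeneralLinearGroup (Fin 6) ℤ,
      (fun g => B.1 * g * (B⁻¹).1) '' (Matrix.transpose '' SigMatSet) = SigMatSet := by
  rintro ⟨B, hB⟩
  have hw : (B⁻¹).1 *ᵥ e1 = 0 := by
    refine eq_zero_of_forall_transpose_mulVec_eq_or_neg _ fun g hg => ?_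
    have hconj : B.1 * gᵀ * (B⁻¹).1 ∈ SigMatSet := hB ▸ ⟨gᵀ, ⟨g, hg, rfl⟩, rfl⟩
    simpa only [conj_mulVec_eq_iff, mulVec_neg] using hconj.2
  have he1 : e1 = B.1 *ᵥ ((B⁻¹).1 *ᵥ e1) := by simp [mulVec_mulVec]
  rw [hw, mulVec_zero] at he1
  simpa [e1] using congrFun he1 0
end

section
/- Let Γ = SL(6,ℤ) *_Σ (Σ × SL(3,ℤ)) where Σ = {g ∈ SL(6,ℤ) : g(e₁) = ±e₁}, and let H < Γ be the subgroup generated by -I ∈ Σ, the element A₀ ∈ SL(3,ℤ), and the elements g_i⁻¹A_i g_i for i = 1,...,k, where A₀,...,A_k are as in the construction and g₁,...,g_k ∈ SL(6,ℤ) \ Σ satisfy g_i g_j⁻¹ ∉ Σ for i ≠ j. Then for every g ∈ Γ, we have gΣg⁻¹ ∩ H ⊆ {±I}. -/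
open Matrix Monoid

noncomputable section

abbrev SL6 := Matrix.SpecialLinearGroup (Fin 6) ℤ
abbrev SL3 := Matrix.SpecialLinearGroup (Fin 3) ℤ

instance : Fact (Even (Fintype.card (Fin 6))) := ⟨by decide⟩

/-- `Σ = {g ∈ SL(6,ℤ) : g e₁ = ±e₁}` as a subgroup of `SL(6,ℤ)`. -/
def Sigma6 : Subgroup SL6 where
  carrier := {g | g.1.mulVec e1 = e1 ∨ g.1.mulVec e1 = -e1}
  one_mem' := by left; simp
  mul_mem' := by
    rintro a b (ha | ha) (hb | hb) <;>
      simp only [Set.mem_setOf_eq, Matrix.SpecialLinearGroup.coe_mul,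
        ← Matrix.mulVec_mulVec, hb, Matrix.mulVec_neg, ha, neg_neg] <;> simp
  inv_mem' := by
    rintro a (ha | ha) <;>
    · have h := congrArg (fun v => (a⁻¹ : SL6).1.mulVec v) ha
      simp only [Matrix.mulVec_mulVec, ← Matrix.SpecialLinearGroup.coe_mul,
        inv_mul_cancel, Matrix.SpecialLinearGroup.coe_one, Matrix.one_mulVec,
        Matrix.mulVec_neg] at h
      first
        | (left; exact h.symm)
        | (right
           have h2 := congrArg Neg.neg h
           simp only [neg_neg] at h2
           exact h2.symm)

/-- The two-element family of groups `{Γ₁, Γ₂}` indexed by `Bool`. -/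
def fam (G₁ G₂ : Type) : Bool → Type := fun b => cond b G₁ G₂

instance famGroup (G₁ G₂ : Type) [Group G₁] [Group G₂] : ∀ b, Group (fam G₁ G₂ b) := fun b => by
  cases b <;> dsimp [fam] <;> infer_instance

/-- The pair of inclusions of the amalgamated subgroup into the two factors. -/
def famHom {S G₁ G₂ : Type} [Group S] [Group G₁] [Group G₂]
    (f1 : S →* G₁) (f2 : S →* G₂) : ∀ b, S →* fam G₁ G₂ b
  | true => f1
  | false => f2

/-- The inclusions of `Σ` into `SL(6,ℤ)` and into `Σ × SL(3,ℤ)`. -/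
def phi : ∀ b : Bool, (↥Sigma6) →* fam SL6 (↥Sigma6 × SL3) b :=
  famHom Sigma6.subtype (MonoidHom.inl _ _)

/-- `Γ = SL(6,ℤ) *_Σ (Σ × SL(3,ℤ))`, as an amalgamated free product (pushout). -/
abbrev Gam := Monoid.PushoutI phi

/-- The canonical map `SL(6,ℤ) → Γ`. -/
def j1 : SL6 →* Gam := Monoid.PushoutI.of (φ := phi) true

/-- The canonical map `Λ = SL(3,ℤ) → Γ`. -/
def jL : SL3 →* Gam :=
  (Monoid.PushoutI.of (φ := phi) false).comp
    ((MonoidHom.inr (↥Sigma6) SL3 : SL3 →* (↥Sigma6 × SL3)) : SL3 →* fam SL6 (↥Sigma6 × SL3) false)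

/-- The matrices `A₀(p) = [[1,0,0],[0,p-2,1],[0,-1,0]]`,
`A₁(p) = [[p-2,0,1],[0,1,0],[-1,0,0]]` and, for `i ≥ 2`,
`A_i(p) = [[p-2,1,0],[-1,0,0],[0,0,1]]`, as elements of `SL(3,ℤ)`. -/
def matA (i : ℕ) (p : ℕ) : SL3 :=
  if i = 0 then ⟨!![1, 0, 0; 0, (p : ℤ) - 2, 1; 0, -1, 0], by
    rw [Matrix.det_fin_three]; simp [Matrix.vecHead, Matrix.vecTail]⟩
  else if i = 1 then ⟨!![(p : ℤ) - 2, 0, 1; 0, 1, 0; -1, 0, 0], by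
    rw [Matrix.det_fin_three]; simp [Matrix.vecHead, Matrix.vecTail]⟩
  else ⟨!![(p : ℤ) - 2, 1, 0; -1, 0, 0; 0, 0, 1], by
    rw [Matrix.det_fin_three]; simp [Matrix.vecHead, Matrix.vecTail]⟩

/-- The subgroup `H < Γ` generated by `-I ∈ Σ`, by `A₀ ∈ SL(3,ℤ)` and by the
elements `gᵢ⁻¹ Aᵢ gᵢ`, `1 ≤ i ≤ k`. -/
def Hgrp (k : ℕ) (p : ℕ → ℕ) (gs : ℕ → SL6) : Subgroup Gam :=
  Subgroup.closure ({j1 (-1), jL (matA 0 (p 0))} ∪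
    {x | ∃ i, 1 ≤ i ∧ i ≤ k ∧ x = (j1 (gs i))⁻¹ * jL (matA i (p i)) * j1 (gs i)})


/-- The subgroup `{±1}` of `SL(6,ℤ)`. -/
def Nsub : Subgroup SL6 := Subgroup.zpowers (-1)

instance : Nsub.Normal := by
  constructor
  rintro n ⟨m, rfl⟩ g
  have hc : Commute ((-1 : SL6) ^ m) g := (Commute.neg_one_left g).zpow_left m
  rw [← hc.eq, mul_assoc, mul_inv_cancel, mul_one]
  exact ⟨m, rfl⟩

/-- The family of maps to the quotient `SL6 ⧸ {±1}`. -/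
def famF : ∀ b, fam SL6 (↥Sigma6 × SL3) b →* (SL6 ⧸ Nsub)
  | true => QuotientGroup.mk' Nsub
  | false => (QuotientGroup.mk' Nsub).comp (Sigma6.subtype.comp (MonoidHom.fst _ _))

theorem famF_compat : ∀ b, (famF b).comp (phi b) =
    (QuotientGroup.mk' Nsub).comp Sigma6.subtype := by
  intro b; cases b <;> rfl

/-- The quotient homomorphism `Γ → SL6 ⧸ {±1}` killing the `SL3` factor. -/
def psi : Gam →* (SL6 ⧸ Nsub) :=
  Monoid.PushoutI.lift famF ((QuotientGroup.mk' Nsub).comp Sigma6.subtype) famF_compat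

set_option maxHeartbeats 1000000 in
theorem psi_j1 (x : SL6) : psi (j1 x) = QuotientGroup.mk' Nsub x := by
  show Monoid.PushoutI.lift famF ((QuotientGroup.mk' Nsub).comp Sigma6.subtype) famF_compat
      (Monoid.PushoutI.of (φ := phi) true x) = famF true x
  exact Monoid.PushoutI.lift_of famF _ famF_compat (i := true) x

theorem psi_jL (A : SL3) : psi (jL A) = 1 := by
  have h : psi (jL A) = famF false ((1 : ↥Sigma6), A) :=
    Monoid.PushoutI.lift_of famF _ famF_compat _
  rw [h]
  show QuotientGroup.mk' Nsub (Sigma6.subtype 1) = 1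
  simp

/-- for every `g ∈ Γ`, `g Σ g⁻¹ ∩ H ⊆ {±I}`. -/
theorem stmt_9 (k : ℕ) (hk : 1 ≤ k) (p : ℕ → ℕ)
    (hp0 : p 0 = 5) (hp1 : p 1 = 7)
    (hprime : ∀ i ≤ k, (p i).Prime)
    (hp11 : ∀ i, 2 ≤ i → i ≤ k → 11 ≤ p i)
    (hdist : ∀ i j, i ≤ k → j ≤ k → i ≠ j → p i ≠ p j)
    (gs : ℕ → SL6)
    (hgs : ∀ i, 1 ≤ i → i ≤ k → gs i ∉ Sigma6)
    (hgs2 : ∀ i j, 1 ≤ i → i ≤ k → 1 ≤ j → j ≤ k → i ≠ j → gs i * (gs j)⁻¹ ∉ Sigma6) :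
    ∀ g : Gam, ∀ s : ↥Sigma6, g * j1 (s : SL6) * g⁻¹ ∈ Hgrp k p gs →
      (s : SL6) = 1 ∨ (s : SL6) = -1 := by
  have hH : Hgrp k p gs ≤ psi.ker := by
    rw [Hgrp, Subgroup.closure_le]
    rintro x (hx | hx)
    · rcases hx with rfl | rfl
      · simp only [SetLike.mem_coe, MonoidHom.mem_ker, psi_j1]
        rw [QuotientGroup.mk'_apply, QuotientGroup.eq_one_iff]
        exact ⟨1, by simp⟩
      · simp only [SetLike.mem_coe, MonoidHom.mem_ker, psi_jL]
    · obtain ⟨i, -, -, rfl⟩ := hx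
      simp only [SetLike.mem_coe, MonoidHom.mem_ker, _root_.map_mul, map_inv, psi_jL]
      simp
  intro g s hmem
  have h1 : psi (g * j1 (s : SL6) * g⁻¹) = 1 := hH hmem
  have h2 : psi (j1 (s : SL6)) = 1 := by
    have := congrArg (fun x => (psi g)⁻¹ * x * psi g) h1
    simpa [_root_.map_mul, map_inv, mul_assoc] using this
  rw [psi_j1, QuotientGroup.mk'_apply, QuotientGroup.eq_one_iff,
    Nsub, Subgroup.mem_zpowers_iff] at h2
  obtain ⟨m, hm⟩ := h2
  rcases Int.even_or_odd m with he | ho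
  · left
    rw [← hm]; exact he.neg_one_zpow
  · right
    obtain ⟨n, rfl⟩ := ho
    rw [← hm, _root_.zpow_add, Even.neg_one_zpow ⟨n, two_mul n⟩, zpow_one, one_mul]

end
end
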